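/- Let B be the symmetric bilinear form on ℂ^8 defined by B(u,v) = u_1v_1 + u_2v_2 + u_3v_3 + u_4v_4 − u_5v_5 − u_6v_6 − u_7v_7 − u_8v_8. Let λ, μ, ω, ζ ∈ ℂ satisfy λ² + μ² = 1, ω² = −1, and ζ² = −1. Then the subspace R of ℂ^8 spanned by r_1 = e_1 + ω e_2, r_2 = e_3 + λ e_5 − μ e_6, r_3 = e_4 + μ e_5 + λ e_6, r_4 = e_7 + ζ e_8 satisfies R = R^±. -/
import Mathlib


noncomputable section

/-- The standard basis vectors of `ℂ^8` (indexed `0,…,7` for `e_1,…,e_8`). -/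
def e (i : Fin 8) : Fin 8 → ℂ := Pi.single i 1

/-- The symmetric bilinear form
`B(u,v) = u₁v₁ + u₂v₂ + u₃v₃ + u₄v₄ − u₅v₅ − u₆v₆ − u₇v₇ − u₈v₈` on `ℂ^8`. -/
def Bform (u v : Fin 8 → ℂ) : ℂ :=
  u 0 * v 0 + u 1 * v 1 + u 2 * v 2 + u 3 * v 3
    - u 4 * v 4 - u 5 * v 5 - u 6 * v 6 - u 7 * v 7

/-- The `B`-orthogonal complement `R^± = {v : ∀ r ∈ R, B(v,r) = 0}` of a subspace. -/
def Bperp (R : Submodule ℂ (Fin 8 → ℂ)) : Submodule ℂ (Fin 8 → ℂ) where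
  carrier := {v | ∀ r ∈ R, Bform v r = 0}
  zero_mem' := by intro r hr; simp [Bform]
  add_mem' := by
    intro a b ha hb r hr
    have h1 := ha r hr
    have h2 := hb r hr
    simp only [Set.mem_setOf_eq, Bform, Pi.add_apply] at *
    linear_combination h1 + h2
  smul_mem' := by
    intro c a ha r hr
    have h1 := ha r hr
    simp only [Set.mem_setOf_eq, Bform, Pi.smul_apply, smul_eq_mul] at *
    linear_combination c * h1

lemma Bform_add_right (u x y : Fin 8 → ℂ) :
    Bform u (x + y) = Bform u x + Bform u y := by
  simp [Bform]; ring

lemma Bform_smul_right (c : ℂ) (u x : Fin 8 → ℂ) :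
    Bform u (c • x) = c * Bform u x := by
  simp [Bform]; ring

lemma Bform_zero_right (u : Fin 8 → ℂ) : Bform u 0 = 0 := by
  simp [Bform]

lemma mem_Bperp_span (v : Fin 8 → ℂ) (s : Set (Fin 8 → ℂ))
    (h : ∀ g ∈ s, Bform v g = 0) : v ∈ Bperp (Submodule.span ℂ s) := by
  intro r hr
  induction hr using Submodule.span_induction with
  | mem x hx => exact h x hx
  | zero => exact Bform_zero_right v
  | add x y _ _ hx hy => rw [Bform_add_right, hx, hy, add_zero]
  | smul c x _ hx => rw [Bform_smul_right, hx, mul_zero]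

/-- The one-parameter family of self-dual operads arising in Case 18
(pivot columns `{1,3,4,7}`): if `λ² + μ² = 1`, `ω² = −1` and `ζ² = −1`, then the span
of `r₁ = e₁ + ω e₂`, `r₂ = e₃ + λ e₅ − μ e₆`, `r₃ = e₄ + μ e₅ + λ e₆`,
`r₄ = e₇ + ζ e₈` is self-dual. -/
theorem case18_family_self_dual (lam mu om ze : ℂ)
    (hlm : lam ^ 2 + mu ^ 2 = 1) (hom : om ^ 2 = -1) (hze : ze ^ 2 = -1)
    (R : Submodule ℂ (Fin 8 → ℂ))
    (hR : R = Submodule.span ℂ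
        {e 0 + om • e 1,
         e 2 + lam • e 4 - mu • e 5,
         e 3 + mu • e 4 + lam • e 5,
         e 6 + ze • e 7}) :
    R = Bperp R := by
  subst hR
  set r1 : Fin 8 → ℂ := e 0 + om • e 1 with hr1
  set r2 : Fin 8 → ℂ := e 2 + lam • e 4 - mu • e 5 with hr2
  set r3 : Fin 8 → ℂ := e 3 + mu • e 4 + lam • e 5 with hr3
  set r4 : Fin 8 → ℂ := e 6 + ze • e 7 with hr4
  apply le_antisymm
  · rw [Submodule.span_le]
    intro g hg
    apply mem_Bperp_span
    intro g' hg'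
    simp only [Set.mem_insert_iff, Set.mem_singleton_iff] at hg hg'
    rcases hg with h | h | h | h <;> rcases hg' with h' | h' | h' | h' <;>
      subst h <;> subst h' <;>
      simp [Bform, hr1, hr2, hr3, hr4, e, Pi.single_apply] <;>
      first
      | linear_combination hom
      | linear_combination -hlm
      | linear_combination hze
      | linear_combination -hze
      | linear_combination -hom
      | linear_combination hlm
      | ring
  · intro v hv
    have m1 : r1 ∈ Submodule.span ℂ ({r1, r2, r3, r4} : Set (Fin 8 → ℂ)) :=
      Submodule.subset_span (by simp)
    have m2 : r2 ∈ Submodule.span ℂ ({r1, r2, r3, r4} : Set (Fin 8 → ℂ)) :=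
      Submodule.subset_span (by simp)
    have m3 : r3 ∈ Submodule.span ℂ ({r1, r2, r3, r4} : Set (Fin 8 → ℂ)) :=
      Submodule.subset_span (by simp)
    have m4 : r4 ∈ Submodule.span ℂ ({r1, r2, r3, r4} : Set (Fin 8 → ℂ)) :=
      Submodule.subset_span (by simp)
    have h1 := hv r1 m1
    have h2 := hv r2 m2
    have h3 := hv r3 m3
    have h4 := hv r4 m4
    simp [Bform, hr1, hr2, hr3, hr4, e, Pi.single_apply] at h1 h2 h3 h4
    have key : v = v 0 • r1 + v 2 • r2 + v 3 • r3 + v 6 • r4 := by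
      funext j
      fin_cases j <;>
        simp [hr1, hr2, hr3, hr4, e, Pi.single_apply]
      · linear_combination (-om) * h1 + v 1 * hom
      · linear_combination (-lam) * h2 + (-mu) * h3 + (-(v 4)) * hlm
      · linear_combination mu * h2 + (-lam) * h3 + (-(v 5)) * hlm
      · linear_combination ze * h4 + v 7 * hze
    rw [key]
    exact add_mem (add_mem (add_mem (Submodule.smul_mem _ _ m1)
      (Submodule.smul_mem _ _ m2)) (Submodule.smul_mem _ _ m3))
      (Submodule.smul_mem _ _ m4)
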